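/- The series ∑_{n=1}^∞ ψ(n+2)/(n(n+1)) converges and equals 2 - C, where ψ is the digamma function and C = -ψ(1) is the Euler–Mascheroni constant. -/

import Mathlib

/-!
Since ψ(x + 1) = ψ(x) + 1/x, summation by parts against 1/(n(n+1)) = 1/n - 1/(n+1) telescopes
the partial sums to ψ(1) + 2 - (ψ(N + 2) + 1)/(N + 1). The increments of ψ along the integers
tend to 0, so by Cesàro ψ(N + 2)/(N + 1) → 0.
-/

open Filter

noncomputable def digamma (x : ℝ) : ℝ := deriv (fun y : ℝ => Real.log (Real.Gamma y)) x

open Topology Finset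

lemma hasDerivAt_log_Gamma {x : ℝ} (hx : 0 < x) :
    HasDerivAt (fun y : ℝ => Real.log (Real.Gamma y)) (digamma x) x := by
  have hΓ : DifferentiableAt ℝ Real.Gamma x :=
    Real.differentiableAt_Gamma fun m => by linarith [(m.cast_nonneg : (0 : ℝ) ≤ m)]
  exact (hΓ.log (Real.Gamma_pos_of_pos hx).ne').hasDerivAt

lemma digamma_add_one {x : ℝ} (hx : 0 < x) : digamma (x + 1) = digamma x + x⁻¹ := by
  have hshift : HasDerivAt (fun y : ℝ => Real.log (Real.Gamma (y + 1))) (digamma (x + 1)) x := by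
    simpa using (hasDerivAt_log_Gamma (by linarith : 0 < x + 1)).comp_add_const x 1
  have hsplit : HasDerivAt (fun y : ℝ => Real.log y + Real.log (Real.Gamma y))
      (x⁻¹ + digamma x) x :=
    (Real.hasDerivAt_log hx.ne').add (hasDerivAt_log_Gamma hx)
  have hfun : (fun y : ℝ => Real.log (Real.Gamma (y + 1))) =ᶠ[𝓝 x]
      fun y => Real.log y + Real.log (Real.Gamma y) := by
    filter_upwards [eventually_gt_nhds hx] with y hy
    rw [Real.Gamma_add_one hy.ne', Real.log_mul hy.ne' (Real.Gamma_pos_of_pos hy).ne']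
  rw [(hshift.congr_of_eventuallyEq hfun.symm).unique hsplit, add_comm]

lemma tendsto_div_natCast_of_tendsto_sub {g : ℕ → ℝ}
    (h : Tendsto (fun n => g (n + 1) - g n) atTop (𝓝 0)) :
    Tendsto (fun n : ℕ => g n / n) atTop (𝓝 0) := by
  have hinv : Tendsto (fun n : ℕ => (n : ℝ)⁻¹ * g 0) atTop (𝓝 (0 * g 0)) :=
    (tendsto_inv_atTop_zero.comp tendsto_natCast_atTop_atTop).mul_const (g 0)
  have hmean := h.cesaro.add hinv
  rw [zero_add, zero_mul] at hmean
  refine hmean.congr fun n => ?_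
  rw [sum_range_sub]
  ring

lemma sum_Icc_div_mul_succ {g : ℕ → ℝ} (hg : ∀ n : ℕ, g (n + 1) = g n + ((n : ℝ) + 1)⁻¹)
    (N : ℕ) :
    ∑ n ∈ Icc 1 N, g (n + 1) / ((n : ℝ) * ((n : ℝ) + 1))
      = g 0 + 2 - (g (N + 1) + 1) / ((N : ℝ) + 1) := by
  induction N with
  | zero => simp [hg 0]; ring
  | succ N ih =>
    rw [sum_Icc_succ_top (by omega), ih, hg (N + 1)]
    push_cast
    field_simp
    ring

theorem digamma_series_identity :
    Tendsto (fun N : ℕ => ∑ n ∈ Finset.Icc 1 N,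
        digamma ((n : ℝ) + 2) / ((n : ℝ) * ((n : ℝ) + 1)))
      atTop (nhds (2 - (-digamma 1))) := by
  set g : ℕ → ℝ := fun n => digamma ((n : ℝ) + 1) with hg_def
  have hg : ∀ n : ℕ, g (n + 1) = g n + ((n : ℝ) + 1)⁻¹ := fun n => by
    simpa [hg_def] using digamma_add_one (x := (n : ℝ) + 1) (by positivity)
  have hsum : ∀ N : ℕ, ∑ n ∈ Icc 1 N, digamma ((n : ℝ) + 2) / ((n : ℝ) * ((n : ℝ) + 1))
      = g 0 + 2 - (g (N + 1) + 1) / ((N : ℝ) + 1) := fun N => by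
    rw [← sum_Icc_div_mul_succ hg]
    refine sum_congr rfl fun n _ => ?_
    simp only [hg_def]
    push_cast
    ring_nf
  have hrest : Tendsto (fun N : ℕ => (g (N + 1) + 1) / ((N : ℝ) + 1)) atTop (𝓝 0) := by
    have hdiff : Tendsto (fun n => (g (n + 1) + 1) - (g n + 1)) atTop (𝓝 0) := by
      simp only [hg, add_sub_add_right_eq_sub, add_sub_cancel_left]
      exact tendsto_one_div_add_atTop_nhds_zero_nat.congr fun n => one_div _
    simpa [Function.comp_def] using
      (tendsto_div_natCast_of_tendsto_sub (g := fun n => g n + 1) hdiff).comp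
        (tendsto_add_atTop_nat 1)
  simp only [hsum]
  convert (tendsto_const_nhds (x := g 0 + 2)).sub hrest using 2
  simp [hg_def]
  ring
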